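/- Let φ and Φ denote the standard normal density and CDF. The function g(η) = -η·φ(η)/(1-Φ(η)) + φ(η)²/(1-Φ(η))² is strictly positive for all η ∈ ℝ. -/

import Mathlib

open MeasureTheory

/-- Standard normal density. -/
noncomputable def stdNormalPDF (x : ℝ) : ℝ := Real.exp (-(x ^ 2) / 2) / Real.sqrt (2 * Real.pi)

/-- Standard normal CDF. -/
noncomputable def stdNormalCDF (x : ℝ) : ℝ := ∫ t in Set.Iic x, stdNormalPDF t

/-!
Writing `Q(η) = 1 - Φ(η) = ∫_η^∞ φ > 0`, one has `g(η) = φ(η) (φ(η) - η Q(η)) / Q(η)²`.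
Since `φ' = -t φ`, the tail integral `∫_η^∞ t φ(t) dt` equals `φ(η)`, so
`φ(η) - η Q(η) = ∫_η^∞ (t - η) φ(t) dt`, whose integrand is positive on `(η, ∞)`.
-/

open Real Set Filter Topology ProbabilityTheory

lemma setIntegral_pos_of_pos {X : Type*} [MeasurableSpace X] {μ : Measure X} {s : Set X}
    {f : X → ℝ} (hs : MeasurableSet s) (hμ : μ s ≠ 0) (hf : IntegrableOn f s μ)
    (hpos : ∀ x ∈ s, 0 < f x) : 0 < ∫ x in s, f x ∂μ := by
  rw [setIntegral_pos_iff_support_of_nonneg_ae _ hf]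
  · have hsupp : Function.support f ∩ s = s :=
      inter_eq_right.mpr fun x hx => (hpos x hx).ne'
    rw [hsupp]
    exact pos_iff_ne_zero.mpr hμ
  · filter_upwards [ae_restrict_mem hs] with x hx using (hpos x hx).le

lemma stdNormalPDF_eq_gaussianPDFReal : stdNormalPDF = gaussianPDFReal 0 1 := by
  ext x
  simp [stdNormalPDF, gaussianPDFReal, div_eq_inv_mul]

lemma stdNormalPDF_pos (x : ℝ) : 0 < stdNormalPDF x := by
  unfold stdNormalPDF; positivity

lemma integrable_stdNormalPDF : Integrable stdNormalPDF :=
  stdNormalPDF_eq_gaussianPDFReal ▸ integrable_gaussianPDFReal 0 1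

lemma integral_stdNormalPDF : ∫ x, stdNormalPDF x = 1 :=
  stdNormalPDF_eq_gaussianPDFReal ▸ integral_gaussianPDFReal_eq_one 0 one_ne_zero

lemma one_sub_stdNormalCDF (x : ℝ) : 1 - stdNormalCDF x = ∫ t in Ioi x, stdNormalPDF t := by
  rw [← integral_stdNormalPDF, stdNormalCDF, ← intervalIntegral.integral_Iic_add_Ioi
    integrable_stdNormalPDF.integrableOn integrable_stdNormalPDF.integrableOn, add_sub_cancel_left]

lemma one_sub_stdNormalCDF_pos (x : ℝ) : 0 < 1 - stdNormalCDF x := by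
  rw [one_sub_stdNormalCDF]
  exact setIntegral_pos_of_pos measurableSet_Ioi (by simp)
    integrable_stdNormalPDF.integrableOn fun t _ => stdNormalPDF_pos t

lemma hasDerivAt_stdNormalPDF (x : ℝ) : HasDerivAt stdNormalPDF (-x * stdNormalPDF x) x := by
  have hexponent : HasDerivAt (fun s : ℝ => -(s ^ 2) / 2) (-x) x := by
    exact ((hasDerivAt_pow 2 x).neg.div_const 2).congr_deriv (by ring)
  unfold stdNormalPDF
  exact (hexponent.exp.div_const (√(2 * π))).congr_deriv (by ring)

lemma tendsto_stdNormalPDF_atTop : Tendsto stdNormalPDF atTop (𝓝 0) := by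
  have hexponent : Tendsto (fun s : ℝ => -(s ^ 2) / 2) atTop atBot := by
    simpa [neg_div] using (tendsto_pow_atTop two_ne_zero).atTop_div_const (zero_lt_two' ℝ)
  have h := (tendsto_exp_atBot.comp hexponent).div_const (√(2 * π))
  rwa [zero_div] at h

lemma integrable_mul_stdNormalPDF : Integrable fun t : ℝ => t * stdNormalPDF t := by
  have h := (integrable_mul_exp_neg_mul_sq (b := 1 / 2) one_half_pos).div_const (√(2 * π))
  refine h.congr (ae_of_all _ fun t => ?_)
  simp only [stdNormalPDF]
  ring_nf

lemma setIntegral_Ioi_mul_stdNormalPDF (x : ℝ) :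
    ∫ t in Ioi x, t * stdNormalPDF t = stdNormalPDF x := by
  have h := integral_Ioi_of_hasDerivAt_of_tendsto' (a := x) (f := fun s => -stdNormalPDF s)
    (fun t _ => (hasDerivAt_stdNormalPDF t).neg.congr_deriv (by ring))
    integrable_mul_stdNormalPDF.integrableOn tendsto_stdNormalPDF_atTop.neg
  simpa using h

/-- Mills' ratio inequality. -/
lemma mul_one_sub_stdNormalCDF_lt_stdNormalPDF (x : ℝ) :
    x * (1 - stdNormalCDF x) < stdNormalPDF x := by
  have hint : IntegrableOn (fun t => (t - x) * stdNormalPDF t) (Ioi x) := by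
    exact (integrable_mul_stdNormalPDF.sub (integrable_stdNormalPDF.const_mul x)).integrableOn
      |>.congr_fun (fun t _ => (sub_mul t x _).symm) measurableSet_Ioi
  have hpos : 0 < ∫ t in Ioi x, (t - x) * stdNormalPDF t :=
    setIntegral_pos_of_pos measurableSet_Ioi (by simp) hint
      fun t ht => mul_pos (sub_pos.mpr ht) (stdNormalPDF_pos t)
  have heq : ∫ t in Ioi x, (t - x) * stdNormalPDF t
      = stdNormalPDF x - x * (1 - stdNormalCDF x) := by
    simp only [sub_mul]
    rw [integral_sub integrable_mul_stdNormalPDF.integrableOn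
      (integrable_stdNormalPDF.integrableOn.const_mul x), integral_const_mul,
      setIntegral_Ioi_mul_stdNormalPDF, one_sub_stdNormalCDF]
  linarith

/-- `g(η) = -η φ(η)/(1-Φ(η)) + φ(η)²/(1-Φ(η))²` is strictly positive on ℝ. -/
theorem stmt2 (η : ℝ) :
    0 < -η * stdNormalPDF η / (1 - stdNormalCDF η)
        + (stdNormalPDF η) ^ 2 / (1 - stdNormalCDF η) ^ 2 := by
  have hQ := one_sub_stdNormalCDF_pos η
  have hMills := sub_pos.mpr (mul_one_sub_stdNormalCDF_lt_stdNormalPDF η)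
  have hφ := stdNormalPDF_pos η
  have hg : -η * stdNormalPDF η / (1 - stdNormalCDF η)
        + (stdNormalPDF η) ^ 2 / (1 - stdNormalCDF η) ^ 2
      = stdNormalPDF η * (stdNormalPDF η - η * (1 - stdNormalCDF η))
        / (1 - stdNormalCDF η) ^ 2 := by
    field_simp
    ring
  rw [hg]
  positivity
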